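/- Let p ≥ 2 and n ≥ 1, let h' be a symmetric invertible p×p real matrix (with entries h^{αβ}), let L : Matrix (Fin n) (Fin p) ℝ → ℝ be a smooth (C^∞, or at least C³) function, and let g : Matrix (Fin n) (Fin p) ℝ → Matrix (Fin n) (Fin n) ℝ be a function such that for every v and all i, α, j, β, one half of the second iterated derivative of L at v in the directions of the elementary matrices E_{iα} and E_{jβ} equals h^{αβ}·g(v)_{ij}. Then g is constant (g(v) = g(0) for all v), and consequently L(v) = Σ_{α,β,i,j} h^{αβ}·g(0)_{ij}·v^i_α·v^j_β + (DL(0))(v) + L(0) for all v, where DL(0) is the derivative of L at 0. -/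

import Mathlib

attribute [local instance] Matrix.normedAddCommGroup Matrix.normedSpace

/-- The topology of the chosen norm on matrices (propositionally the product topology). -/
@[reducible] def matTop {m k : Type*} [Fintype m] [Fintype k] : TopologicalSpace (Matrix m k ℝ) :=
  PseudoMetricSpace.toUniformSpace.toTopologicalSpace

section Aux

attribute [local instance] matTop

variable {p n : ℕ} {F : Type*} [NormedAddCommGroup F] [NormedSpace ℝ F]

/-- A continuous linear map on matrices is determined by its values on the std basis. -/
lemma clm_eval_aux (l : Matrix (Fin n) (Fin p) ℝ →L[ℝ] F) (v : Matrix (Fin n) (Fin p) ℝ) :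
    l v = ∑ i, ∑ α, v i α • l (Matrix.single i α 1) := by
  conv_lhs => rw [Matrix.matrix_eq_sum_single v]
  rw [map_sum]
  refine Finset.sum_congr rfl fun i _ => ?_
  rw [map_sum]
  refine Finset.sum_congr rfl fun α _ => ?_
  rw [show Matrix.single i α (v i α) = v i α • Matrix.single i α (1:ℝ) by
    rw [Matrix.smul_single, smul_eq_mul, mul_one], map_smul]

lemma sum4_comm (f : Fin p → Fin p → Fin n → Fin n → ℝ) :
    ∑ α, ∑ β, ∑ i, ∑ j, f α β i j = ∑ i, ∑ α, ∑ j, ∑ β, f α β i j := by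
  calc ∑ α, ∑ β, ∑ i, ∑ j, f α β i j
      = ∑ α, ∑ i, ∑ β, ∑ j, f α β i j :=
        Finset.sum_congr rfl fun α _ => Finset.sum_comm
    _ = ∑ i, ∑ α, ∑ β, ∑ j, f α β i j := Finset.sum_comm
    _ = ∑ i, ∑ α, ∑ j, ∑ β, f α β i j :=
        Finset.sum_congr rfl fun i _ => Finset.sum_congr rfl fun α _ => Finset.sum_comm

end Aux

lemma quad_hasFDerivAt {E : Type*} [NormedAddCommGroup E] [NormedSpace ℝ E]
    (B : E →L[ℝ] E →L[ℝ] ℝ) (v : E) :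
    HasFDerivAt (fun w => B w w) (B v + B.flip v) v := by
  have hb := B.isBoundedBilinearMap
  have hid : HasFDerivAt (fun w : E => (w, w))
      ((ContinuousLinearMap.id ℝ E).prod (ContinuousLinearMap.id ℝ E)) v :=
    (hasFDerivAt_id v).prodMk (hasFDerivAt_id v)
  have hcomp := HasFDerivAt.comp (f := fun w : E => (w, w)) v (hb.hasFDerivAt (v, v)) hid
  have heq : (hb.deriv (v, v)).comp
      ((ContinuousLinearMap.id ℝ E).prod (ContinuousLinearMap.id ℝ E)) = B v + B.flip v := by
    ext z
    simp [IsBoundedBilinearMap.deriv_apply]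
  exact hcomp.congr_fderiv heq

set_option maxHeartbeats 1000000 in
/-- When `dim T = p ≥ 2`, Kronecker `h`-regularity of a multi-time Lagrangian function
`L` (i.e. `(1/2) ∂²L/∂x^i_α ∂x^j_β = h^{αβ} g(v)_{ij}`) forces the spatial d-tensor `g`
to be independent of the partial directions, and `L` is necessarily quadratic:
`L(v) = Σ h^{αβ} g(0)_{ij} v^i_α v^j_β + (DL(0))(v) + L(0)`. -/
theorem stmt_9 (p n : ℕ) (hp : 2 ≤ p) (hn : 1 ≤ n)
    (h' : Matrix (Fin p) (Fin p) ℝ) (hsym : h'.IsSymm) (hinv : IsUnit h'.det)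
    (L : Matrix (Fin n) (Fin p) ℝ → ℝ) (hL : ContDiff ℝ (⊤ : ℕ∞) L)
    (g : Matrix (Fin n) (Fin p) ℝ → Matrix (Fin n) (Fin n) ℝ)
    (hg : ∀ (v : Matrix (Fin n) (Fin p) ℝ) (i : Fin n) (α : Fin p) (j : Fin n) (β : Fin p),
      (1 / 2) * fderiv ℝ (fun w => fderiv ℝ L w (Matrix.single i α 1)) v
        (Matrix.single j β 1) = h' α β * g v i j) :
    (∀ v, g v = g 0) ∧
    (∀ v, L v = (∑ α, ∑ β, ∑ i, ∑ j, h' α β * g 0 i j * v i α * v j β)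
      + fderiv ℝ L 0 v + L 0) := by
  classical
  letI : TopologicalSpace (Matrix (Fin n) (Fin p) ℝ) := matTop
  set E := fun (i : Fin n) (α : Fin p) => Matrix.single i α (1:ℝ) with hEdef
  have hdL0 : Differentiable ℝ L := hL.differentiable (by simp)
  have hL1 : ContDiff ℝ (⊤ : ℕ∞) (fderiv ℝ L) := hL.fderiv_right (by simp)
  have hdL : Differentiable ℝ (fderiv ℝ L) := hL1.differentiable (by simp)
  set A := fderiv ℝ (fderiv ℝ L) with hAdef
  have hL2 : ContDiff ℝ (⊤ : ℕ∞) A := hL1.fderiv_right (by simp)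
  have hdA : Differentiable ℝ A := hL2.differentiable (by simp)
  -- first: rewriting the Hessian entries
  have hA1 : ∀ (v x y : Matrix (Fin n) (Fin p) ℝ),
      fderiv ℝ (fun w => fderiv ℝ L w x) v y = A v y x := by
    intro v x y
    have h := fderiv_clm_apply (hdL v) (differentiableAt_const x)
    rw [h]
    simp [hAdef]
  -- symmetry of the second derivative
  have hsym2 : ∀ (v x y : Matrix (Fin n) (Fin p) ℝ), A v x y = A v y x := by
    intro v x y
    exact second_derivative_symmetric (fun w => (hdL0 w).hasFDerivAt) (hdL v).hasFDerivAt x y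
  -- third derivative
  set T := fderiv ℝ A with hTdef
  have hdAx : ∀ x, Differentiable ℝ (fun w => A w x) :=
    fun x => hdA.clm_apply (differentiable_const x)
  have hT1 : ∀ (v z x y : Matrix (Fin n) (Fin p) ℝ),
      fderiv ℝ (fun w => A w x y) v z = T v z x y := by
    intro v z x y
    have h1 : fderiv ℝ (fun w => A w x) v = (T v).flip x := by
      have h := fderiv_clm_apply (hdA v) (differentiableAt_const x)
      rw [h]
      simp [hTdef]
    have h2 := fderiv_clm_apply (hdAx x v) (differentiableAt_const y)
    rw [h2]
    simp [h1]
  have hsym12 : ∀ (v z x : Matrix (Fin n) (Fin p) ℝ), T v z x = T v x z := by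
    intro v z x
    exact second_derivative_symmetric (fun w => (hdL w).hasFDerivAt) (hdA v).hasFDerivAt z x
  have hsym23 : ∀ (v z x y : Matrix (Fin n) (Fin p) ℝ), T v z x y = T v z y x := by
    intro v z x y
    have hfun : (fun w => A w x y) = (fun w => A w y x) := funext fun w => hsym2 w x y
    rw [← hT1 v z x y, ← hT1 v z y x, hfun]
  have hsym13 : ∀ (v z x y : Matrix (Fin n) (Fin p) ℝ), T v z x y = T v y x z := by
    intro v z x y
    rw [hsym23, show T v z y = T v y z from hsym12 v z y, hsym23]
  -- the Kronecker regularity condition rewritten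
  have hg' : ∀ v i α j β, A v (E j β) (E i α) = 2 * (h' α β * g v i j) := by
    intro v i α j β
    have h : (1 / 2) * fderiv ℝ (fun w => fderiv ℝ L w (E i α)) v (E j β) = h' α β * g v i j :=
      hg v i α j β
    rw [hA1] at h
    linarith
  -- find a nonzero entry of h'
  have hpne : Nonempty (Fin p) := ⟨⟨0, lt_of_lt_of_le two_pos hp⟩⟩
  obtain ⟨α₀, β₀, hσ₀⟩ : ∃ α β, h' α β ≠ 0 := by
    by_contra hcon
    push_neg at hcon
    have hz : h' = 0 := by ext a b; exact hcon a b
    rw [hz, Matrix.det_zero] at hinv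
    simp at hinv
  -- differentiability of entries of g
  have hgrep : ∀ i j, (fun v => g v i j)
      = fun v => (2 * h' α₀ β₀)⁻¹ * (A v (E j β₀) (E i α₀)) := by
    intro i j
    funext v
    rw [hg' v i α₀ j β₀]
    field_simp
  have gdiff : ∀ i j, Differentiable ℝ (fun v => g v i j) := by
    intro i j
    rw [hgrep i j]
    exact ((hdAx (E j β₀)).clm_apply (differentiable_const (E i α₀))).const_mul _
  -- relation between third derivative and derivative of g
  have hDg : ∀ (v : Matrix (Fin n) (Fin p) ℝ) i j α β (z : Matrix (Fin n) (Fin p) ℝ),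
      T v z (E j β) (E i α) = 2 * h' α β * fderiv ℝ (fun w => g w i j) v z := by
    intro v i j α β z
    rw [← hT1 v z (E j β) (E i α)]
    have hfun : (fun w => A w (E j β) (E i α)) = fun w => (2 * h' α β) * g w i j := by
      funext w
      rw [hg' w i α j β]
      ring
    rw [hfun, fderiv_const_mul (gdiff i j v) (2 * h' α β)]
    simp
  -- the derivative of g vanishes on basis directions
  have hDzero : ∀ (v : Matrix (Fin n) (Fin p) ℝ) i j k γ,
      fderiv ℝ (fun w => g w i j) v (E k γ) = 0 := by
    intro v i j k γ
    haveI : Nontrivial (Fin p) := Fin.nontrivial_iff_two_le.mpr hp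
    obtain ⟨α, hαγ⟩ := exists_ne γ
    set x := fderiv ℝ (fun w => g w i j) v (E k γ) with hx
    set y := fderiv ℝ (fun w => g w k j) v (E i α) with hy
    have rel : ∀ β, h' α β * x = h' γ β * y := by
      intro β
      have h1 := hDg v i j α β (E k γ)
      have h2 := hDg v k j γ β (E i α)
      have h3 : T v (E k γ) (E j β) (E i α) = T v (E i α) (E j β) (E k γ) :=
        hsym13 v (E k γ) (E j β) (E i α)
      rw [h1, h2] at h3
      linarith
    have hmul := Matrix.mul_nonsing_inv h' hinv
    have e1 : ∑ β, h' α β * h'⁻¹ β α = 1 := by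
      have h := Matrix.ext_iff.mpr hmul α α
      simpa [Matrix.mul_apply, Matrix.one_apply] using h
    have e2 : ∑ β, h' γ β * h'⁻¹ β α = 0 := by
      have h := Matrix.ext_iff.mpr hmul γ α
      simpa [Matrix.mul_apply, Matrix.one_apply, hαγ.symm] using h
    have key : x * (∑ β, h' α β * h'⁻¹ β α) = y * (∑ β, h' γ β * h'⁻¹ β α) := by
      rw [Finset.mul_sum, Finset.mul_sum]
      refine Finset.sum_congr rfl fun β _ => ?_
      rw [show x * (h' α β * h'⁻¹ β α) = (h' α β * x) * h'⁻¹ β α by ring, rel β]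
      ring
    rw [e1, e2, mul_one, mul_zero] at key
    exact key
  -- the derivative of g vanishes identically
  have hfz : ∀ (v : Matrix (Fin n) (Fin p) ℝ) i j, fderiv ℝ (fun w => g w i j) v = 0 := by
    intro v i j
    ext w
    rw [clm_eval_aux]
    simp only [ContinuousLinearMap.zero_apply]
    refine Finset.sum_eq_zero fun k _ => Finset.sum_eq_zero fun γ _ => ?_
    rw [hDzero v i j k γ, smul_zero]
  -- g is constant
  have gconst : ∀ v, g v = g 0 := by
    intro v
    ext i j
    exact is_const_of_fderiv_eq_zero (gdiff i j) (fun w => hfz w i j) v 0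
  refine ⟨gconst, ?_⟩
  -- the Hessian is constant
  have hAc : ∀ v, A v = A 0 := by
    intro v
    refine ContinuousLinearMap.ext fun w => ContinuousLinearMap.ext fun u => ?_
    have expand : ∀ (v' : Matrix (Fin n) (Fin p) ℝ), A v' w u
        = ∑ j, ∑ β, w j β • ∑ i, ∑ α, u i α • (2 * (h' α β * g v' i j)) := by
      intro v'
      rw [show A v' w u = ((A v').flip u) w from rfl, clm_eval_aux]
      refine Finset.sum_congr rfl fun j _ => Finset.sum_congr rfl fun β _ => ?_
      congr 1
      rw [show (A v').flip u (E j β) = (A v' (E j β)) u from rfl, clm_eval_aux]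
      refine Finset.sum_congr rfl fun i _ => Finset.sum_congr rfl fun α _ => ?_
      rw [hg' v' i α j β]
    rw [expand v, expand 0, gconst v]
  set B := A 0 with hBdef
  have hBsym : ∀ x y, B x y = B y x := fun x y => hsym2 0 x y
  -- fderiv L v = fderiv L 0 + B v
  have hpsi : ∀ v, fderiv ℝ L v = fderiv ℝ L 0 + B v := by
    intro v
    have hdiff : Differentiable ℝ (fun u => fderiv ℝ L u - B u) :=
      hdL.sub B.differentiable
    have hfd : ∀ w, fderiv ℝ (fun u => fderiv ℝ L u - B u) w = 0 := by
      intro w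
      rw [fderiv_fun_sub (hdL w) (B.differentiableAt), B.fderiv]
      rw [show fderiv ℝ (fderiv ℝ L) w = A w from rfl, hAc w, sub_self]
    have h0 : fderiv ℝ L v - B v = fderiv ℝ L 0 - B 0 :=
      is_const_of_fderiv_eq_zero hdiff hfd v 0
    rw [map_zero, sub_zero] at h0
    exact eq_add_of_sub_eq h0
  -- derivative of the quadratic part
  have hq : ∀ v, HasFDerivAt (fun w => B w w) (B v + B.flip v) v :=
    fun v => quad_hasFDerivAt B v
  -- the function L minus its quadratic model is constant
  have hchi : ∀ v, HasFDerivAt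
      (fun w => L w - (fderiv ℝ L 0 w + (1/2) * (B w w)))
      (0 : Matrix (Fin n) (Fin p) ℝ →L[ℝ] ℝ) v := by
    intro v
    have h1 : HasFDerivAt L (fderiv ℝ L v) v := (hdL0 v).hasFDerivAt
    have h2 : HasFDerivAt (fun w => fderiv ℝ L 0 w + (1/2) * (B w w))
        (fderiv ℝ L 0 + (1/2 : ℝ) • (B v + B.flip v)) v :=
      ((fderiv ℝ L 0).hasFDerivAt (x := v)).add ((hq v).const_mul ((1:ℝ)/2))
    have h3 := h1.sub h2
    have h0 : fderiv ℝ L v - (fderiv ℝ L 0 + (1/2 : ℝ) • (B v + B.flip v)) = 0 := by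
      rw [hpsi v]
      ext z
      simp [ContinuousLinearMap.flip_apply, hBsym z v]
      ring
    rwa [h0] at h3
  have hLform : ∀ v, L v = (1/2) * (B v v) + fderiv ℝ L 0 v + L 0 := by
    intro v
    have hdiff : Differentiable ℝ (fun w => L w - (fderiv ℝ L 0 w + (1/2) * (B w w))) :=
      fun w => (hchi w).differentiableAt
    have hfd : ∀ w, fderiv ℝ (fun w => L w - (fderiv ℝ L 0 w + (1/2) * (B w w))) w = 0 :=
      fun w => (hchi w).fderiv
    have hconst := is_const_of_fderiv_eq_zero hdiff hfd v 0
    simp only [map_zero, ContinuousLinearMap.zero_apply, mul_zero, add_zero, zero_add,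
      sub_zero] at hconst
    linarith [hconst]
  -- identify the quadratic part with the explicit sum
  intro v
  rw [hLform v]
  have hBvv : B v v = ∑ i, ∑ α, ∑ j, ∑ β, 2 * (h' α β * g 0 i j) * v i α * v j β := by
    have step1 : B v v = ∑ i, ∑ α, v i α • (B v (E i α)) := clm_eval_aux (B v) v
    rw [step1]
    refine Finset.sum_congr rfl fun i _ => Finset.sum_congr rfl fun α _ => ?_
    have step2 : B v (E i α) = ∑ j, ∑ β, v j β • (B (E j β) (E i α)) :=
      clm_eval_aux (B.flip (E i α)) v
    rw [step2, Finset.smul_sum]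
    refine Finset.sum_congr rfl fun j _ => ?_
    rw [Finset.smul_sum]
    refine Finset.sum_congr rfl fun β _ => ?_
    rw [show B (E j β) (E i α) = 2 * (h' α β * g 0 i j) from hg' 0 i α j β]
    simp [smul_eq_mul]
    ring
  rw [hBvv]
  rw [sum4_comm (f := fun α β i j => h' α β * g 0 i j * v i α * v j β)]
  congr 1
  congr 1
  rw [Finset.mul_sum]
  refine Finset.sum_congr rfl fun i _ => ?_
  rw [Finset.mul_sum]
  refine Finset.sum_congr rfl fun α _ => ?_
  rw [Finset.mul_sum]
  refine Finset.sum_congr rfl fun j _ => ?_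
  rw [Finset.mul_sum]
  refine Finset.sum_congr rfl fun β _ => ?_
  ring
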